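/- Let A be a commutative ring, f ∈ A, and Σ_f = { f^{2m} + Σ_{i=1}^n a_i² : a_i ∈ A, m, n ∈ ℕ ∪ {0} }. The canonical ring homomorphism ψ from the localization Σ_f^{-1}A to the ring of abstract real regular functions on D(f), sending a/(f^{2n} + Σ x²) to the function p ↦ a/(f^{2n} + Σ x²) ∈ A_p, is injective. Equivalently: if a, b ∈ A and σ, τ ∈ Σ_f satisfy aτ/σ τ = bσ/σ τ in A_p for every real prime ideal p ∈ D(f), then there exists ρ ∈ Σ_f with ρ(aτ − bσ) = 0 in A. -/

import Mathlib

/-- An ideal `J` of a commutative ring is *real* if whenever a finite sum of squares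
`∑ i, a i ^ 2` lies in `J`, each `a i` lies in `J`. -/
def IsRealIdeal {A : Type*} [CommRing A] (J : Ideal A) : Prop :=
  ∀ (n : ℕ) (a : Fin n → A), (∑ i, a i ^ 2) ∈ J → ∀ i, a i ∈ J

/-- The real Zariski spectrum: the set of real prime ideals of `A`. -/
structure RealSpectrum (A : Type*) [CommRing A] where
  asIdeal : Ideal A
  isPrime : asIdeal.IsPrime
  isReal : IsRealIdeal asIdeal

namespace RealSpectrum

variable {A : Type*} [CommRing A]

instance (p : RealSpectrum A) : p.asIdeal.IsPrime := p.isPrime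

/-- `V(I)`: the set of real prime ideals containing `I`. -/
def zeroLocus (I : Ideal A) : Set (RealSpectrum A) := {p | I ≤ p.asIdeal}

/-- `D(f)`: the set of real prime ideals not containing `f`. -/
def basicOpen (f : A) : Set (RealSpectrum A) := {p | f ∉ p.asIdeal}

end RealSpectrum

/-- The multiplicative subset `Σ_f = { f ^ (2m) + ∑ aᵢ² }` of `A`, as a set. -/
def sigmaSet {A : Type*} [CommRing A] (f : A) : Set A :=
  {x | ∃ (m n : ℕ) (c : Fin n → A), x = f ^ (2 * m) + ∑ i, c i ^ 2}

/-!
Let `d = aτ - bσ` and suppose no element of `Σ_f` annihilates `d`. Then `Ann(d)` misses the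
multiplicative set `Σ_f`, so by Zorn it lies in an ideal `p` maximal among those missing `Σ_f`.
Such a `p` is prime, and it is real because `Σ_f` is stable under adding sums of squares: if
`x² + t ∈ p` with `t` a sum of squares and `x ∉ p`, maximality gives `s = rx + q ∈ Σ_f` with
`q ∈ p`, and then `s² + r²t = q(q + 2rx) + r²(x² + t)` lies in `Σ_f ∩ p`. As `f² ∈ Σ_f`, `p` lies
in `D(f)`, and the equality `aτ/στ = bσ/στ` in `A_p` yields `c ∉ p` with `c·στ·d = 0`, that is,
`c·στ ∈ Ann(d) ⊆ p`.
-/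

theorem IsSumSq.exists_eq_fin_sum_sq {R : Type*} [Semiring R] {s : R} (hs : IsSumSq s) :
    ∃ (n : ℕ) (c : Fin n → R), s = ∑ i, c i ^ 2 := by
  induction hs with
  | zero => exact ⟨0, ![], by simp⟩
  | sq_add a _ ih =>
    obtain ⟨n, c, rfl⟩ := ih
    exact ⟨n + 1, Fin.cons a c, by simp [Fin.sum_univ_succ, pow_two]⟩

theorem Ideal.exists_le_maximal_disjoint {R : Type*} [CommSemiring R] (I : Ideal R) (S : Set R)
    (hI : Disjoint (I : Set R) S) :
    ∃ p : Ideal R, I ≤ p ∧ Maximal (fun J : Ideal R => Disjoint (J : Set R) S) p := by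
  refine zorn_le_nonempty₀ _ (fun c hc hchain J hJ => ?_) I hI
  refine ⟨sSup c, Set.disjoint_left.mpr fun x hx => ?_, fun _ => le_sSup⟩
  obtain ⟨K, hK, hxK⟩ := (Submodule.mem_sSup_of_directed ⟨J, hJ⟩ hchain.directedOn).1 hx
  exact Set.disjoint_left.mp (hc hK) hxK

section RealIdeal

variable {A : Type*} [CommRing A]

theorem isRealIdeal_of_mul_self_add_mem {J : Ideal A}
    (hJ : ∀ x s : A, IsSumSq s → x * x + s ∈ J → x ∈ J) : IsRealIdeal J := by
  intro n c hsum j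
  refine hJ (c j) (∑ i ∈ Finset.univ.erase j, c i ^ 2) (IsSumSq.sum_sq _ c) ?_
  rwa [← pow_two, Finset.add_sum_erase _ (fun i => c i ^ 2) (Finset.mem_univ j)]

theorem isRealIdeal_of_maximal_disjoint {p : Ideal A} {S : Submonoid A}
    (hS : ∀ s ∈ S, ∀ t : A, IsSumSq t → s + t ∈ S)
    (hp : Maximal (fun J : Ideal A => Disjoint (J : Set A) S) p) : IsRealIdeal p := by
  refine isRealIdeal_of_mul_self_add_mem fun x t ht hxt => ?_
  by_contra hx
  have hlt : p < Ideal.span {x} ⊔ p := SetLike.lt_iff_le_and_exists.2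
    ⟨le_sup_right, x, Ideal.mem_sup_left (Ideal.mem_span_singleton_self x), hx⟩
  have hmeets := hp.not_prop_of_gt hlt
  simp only [Set.not_disjoint_iff, SetLike.mem_coe, Ideal.mem_span_singleton_sup] at hmeets
  obtain ⟨s, ⟨r, q, hq, rfl⟩, hs⟩ := hmeets
  have hmem : (r * x + q) * (r * x + q) + r * r * t ∈ p := by
    have : (r * x + q) * (r * x + q) + r * r * t = q * (q + 2 * r * x) + r * r * (x * x + t) := by
      ring
    rw [this]
    exact p.add_mem (p.mul_mem_right _ hq) (p.mul_mem_left _ hxt)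
  exact Set.disjoint_left.mp hp.prop hmem
    (hS _ (S.mul_mem hs hs) _ ((IsSumSq.mul_self r).mul ht))

theorem RealSpectrum.exists_le_disjoint {S : Submonoid A}
    (hS : ∀ s ∈ S, ∀ t : A, IsSumSq t → s + t ∈ S) {I : Ideal A}
    (hI : Disjoint (I : Set A) S) :
    ∃ p : RealSpectrum A, I ≤ p.asIdeal ∧ Disjoint (p.asIdeal : Set A) S := by
  obtain ⟨p, hIp, hp⟩ := I.exists_le_maximal_disjoint S hI
  exact ⟨⟨p, Ideal.isPrime_of_maximally_disjoint p S hp.prop fun _ => hp.not_prop_of_gt,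
    isRealIdeal_of_maximal_disjoint hS hp⟩, hIp, hp.prop⟩

end RealIdeal

section SigmaSet

variable {A : Type*} [CommRing A]

theorem mem_sigmaSet_iff {f x : A} :
    x ∈ sigmaSet f ↔ ∃ (m : ℕ) (s : A), IsSumSq s ∧ x = f ^ (2 * m) + s := by
  constructor
  · rintro ⟨m, n, c, rfl⟩
    exact ⟨m, _, IsSumSq.sum_sq _ c, rfl⟩
  · rintro ⟨m, s, hs, rfl⟩
    obtain ⟨n, c, rfl⟩ := hs.exists_eq_fin_sum_sq
    exact ⟨m, n, c, rfl⟩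

def sigmaSubmonoid (f : A) : Submonoid A where
  carrier := sigmaSet f
  one_mem' := mem_sigmaSet_iff.2 ⟨0, 0, .zero, by simp⟩
  mul_mem' {x y} hx hy := by
    obtain ⟨m, s, hs, rfl⟩ := mem_sigmaSet_iff.1 hx
    obtain ⟨n, t, ht, rfl⟩ := mem_sigmaSet_iff.1 hy
    have hfm : IsSumSq (f ^ (2 * m)) := ((even_two_mul m).isSquare_pow f).isSumSq
    have hfn : IsSumSq (f ^ (2 * n)) := ((even_two_mul n).isSquare_pow f).isSumSq
    refine mem_sigmaSet_iff.2 ⟨m + n, f ^ (2 * m) * t + s * f ^ (2 * n) + s * t, ?_, by ring⟩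
    exact ((hfm.mul ht).add (hs.mul hfn)).add (hs.mul ht)

theorem sigmaSubmonoid_add_isSumSq (f : A) :
    ∀ s ∈ sigmaSubmonoid f, ∀ t : A, IsSumSq t → s + t ∈ sigmaSubmonoid f := by
  intro x hx t ht
  obtain ⟨m, s, hs, rfl⟩ := mem_sigmaSet_iff.1 hx
  exact mem_sigmaSet_iff.2 ⟨m, s + t, hs.add ht, add_assoc _ _ _⟩

theorem mul_self_mem_sigmaSubmonoid (f : A) : f * f ∈ sigmaSubmonoid f :=
  mem_sigmaSet_iff.2 ⟨1, 0, .zero, by ring⟩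

end SigmaSet

open RealSpectrum in
/-- Injectivity of the canonical map `Σ_f⁻¹A → O_X(D(f))`: if `a/σ` and `b/τ`
(`σ, τ ∈ Σ_f`) induce the same fraction `aτ/στ = bσ/στ` in `A_p` for every real prime
`p ∈ D(f)`, then there is `ρ ∈ Σ_f` with `ρ (aτ - bσ) = 0` in `A`. -/
theorem canonical_map_injective {A : Type*} [CommRing A] (f a b σ τ : A)
    (hσ : σ ∈ sigmaSet f) (hτ : τ ∈ sigmaSet f)
    (h : ∀ p : RealSpectrum A, f ∉ p.asIdeal → ∀ hστ : σ * τ ∉ p.asIdeal,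
      IsLocalization.mk' (Localization.AtPrime p.asIdeal) (a * τ)
          (⟨σ * τ, hστ⟩ : p.asIdeal.primeCompl) =
        IsLocalization.mk' (Localization.AtPrime p.asIdeal) (b * σ)
          (⟨σ * τ, hστ⟩ : p.asIdeal.primeCompl)) :
    ∃ ρ ∈ sigmaSet f, ρ * (a * τ - b * σ) = 0 := by
  by_contra! hann
  have hdisj : Disjoint ((Ideal.span {a * τ - b * σ}).annihilator : Set A) (sigmaSubmonoid f) :=
    Set.disjoint_left.mpr fun ρ hρ hρS =>
      hann ρ hρS ((Submodule.mem_annihilator_span_singleton _ _).1 hρ)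
  obtain ⟨p, hle, hp⟩ := exists_le_disjoint (sigmaSubmonoid_add_isSumSq f) hdisj
  have hnotMem : ∀ x ∈ sigmaSubmonoid f, x ∉ p.asIdeal := fun x hx hxp =>
    Set.disjoint_left.mp hp hxp hx
  have hf : f ∉ p.asIdeal := fun hfp =>
    hnotMem _ (mul_self_mem_sigmaSubmonoid f) (p.asIdeal.mul_mem_left f hfp)
  have hστ := hnotMem _ ((sigmaSubmonoid f).mul_mem hσ hτ)
  obtain ⟨c, hc⟩ := (IsLocalization.eq (S := Localization.AtPrime p.asIdeal)).1 (h p hf hστ)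
  refine (c * ⟨σ * τ, hστ⟩ : p.asIdeal.primeCompl).2 (hle ?_)
  rw [Submodule.mem_annihilator_span_singleton, smul_eq_mul]
  push_cast
  linear_combination hc
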